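/- If A is symmetric positive definite and C(0) is positive definite, then the AGRF mean m(t) = (C(0)^{−1} + 2tA)^{−1}(C(0)^{−1} m(0) − t b) converges to −(1/2) A^{−1} b as t → ∞, which is the unique global minimizer of f(x) = xᵀAx + bᵀx + c. -/

import Mathlib

/-!
Writing `P = C0⁻¹`, `Q = 2A`, for `t > 0` we have
`(P + tQ)⁻¹ (v - t b) = (t⁻¹ P + Q)⁻¹ (t⁻¹ v - b)`, a function of `s = t⁻¹` that is continuous at
`s = 0` because `Q` is invertible; its value there is `-Q⁻¹ b`. The minimality is the usual
completion of the square: at the critical point `x₀`, `f (x₀ + d) = f x₀ + dᵀ A d`.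
-/

open Matrix Filter Topology

namespace Matrix

variable {ι : Type*} [Fintype ι]

theorem IsSymm.dotProduct_mulVec_comm {R : Type*} [CommSemiring R] {A : Matrix ι ι R}
    (hA : A.IsSymm) (u w : ι → R) : u ⬝ᵥ A *ᵥ w = w ⬝ᵥ A *ᵥ u := by
  rw [dotProduct_mulVec, ← mulVec_transpose, hA.eq, dotProduct_comm]

theorem IsSymm.quadratic_add_of_critical {R : Type*} [CommRing R] {A : Matrix ι ι R}
    (hA : A.IsSymm) {b x₀ : ι → R} (hx₀ : (2 : R) • (A *ᵥ x₀) + b = 0) (d : ι → R) :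
    (x₀ + d) ⬝ᵥ A *ᵥ (x₀ + d) + b ⬝ᵥ (x₀ + d) = x₀ ⬝ᵥ A *ᵥ x₀ + b ⬝ᵥ x₀ + d ⬝ᵥ A *ᵥ d := by
  have hcross : d ⬝ᵥ ((2 : R) • (A *ᵥ x₀) + b) = 0 := by rw [hx₀, dotProduct_zero]
  rw [dotProduct_add, dotProduct_smul, smul_eq_mul] at hcross
  simp only [mulVec_add, dotProduct_add, add_dotProduct, hA.dotProduct_mulVec_comm x₀ d,
    dotProduct_comm b d]
  linear_combination hcross

theorem PosDef.quadratic_lt_of_critical {A : Matrix ι ι ℝ} (hA : A.PosDef) {b x₀ : ι → ℝ}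
    (hx₀ : (2 : ℝ) • (A *ᵥ x₀) + b = 0) {x : ι → ℝ} (hx : x ≠ x₀) :
    x₀ ⬝ᵥ A *ᵥ x₀ + b ⬝ᵥ x₀ < x ⬝ᵥ A *ᵥ x + b ⬝ᵥ x := by
  have hsymm : A.IsSymm := isHermitian_iff_isSymm.mp hA.isHermitian
  have hpos : 0 < (x - x₀) ⬝ᵥ A *ᵥ (x - x₀) := by
    simpa using hA.dotProduct_mulVec_pos (sub_ne_zero.mpr hx)
  have hsplit := hsymm.quadratic_add_of_critical hx₀ (x - x₀)
  rw [add_sub_cancel] at hsplit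
  linarith

variable [DecidableEq ι]

theorem inv_smul_of_ne_zero {K : Type*} [Field K] {k : K} (hk : k ≠ 0) (M : Matrix ι ι K) :
    (k • M)⁻¹ = k⁻¹ • M⁻¹ := by
  by_cases hM : IsUnit M.det
  · exact inv_smul' M (Units.mk0 k hk) hM
  · have hkM : ¬IsUnit (k • M).det := by
      rwa [det_smul, IsUnit.mul_iff, and_iff_right (isUnit_iff_ne_zero.mpr (pow_ne_zero _ hk))]
    rw [nonsing_inv_apply_not_isUnit _ hM, nonsing_inv_apply_not_isUnit _ hkM, smul_zero]

theorem tendsto_inv_add_smul_mulVec_sub_smul {P Q : Matrix ι ι ℝ} (hQ : IsUnit Q.det)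
    (v w : ι → ℝ) :
    Tendsto (fun t : ℝ => (P + t • Q)⁻¹ *ᵥ (v - t • w)) atTop (𝓝 (-(Q⁻¹ *ᵥ w))) := by
  set g : ℝ → ι → ℝ := fun s => (s • P + Q)⁻¹ *ᵥ (s • v - w)
  have hg_cont : ContinuousAt g 0 := by
    have hinv : ContinuousAt (fun s : ℝ => (s • P + Q)⁻¹) 0 := by
      refine ContinuousAt.comp (f := fun s : ℝ => s • P + Q) ?_ (by fun_prop)
      simpa using continuousAt_matrix_inv Q
        (NormedRing.inverse_continuousAt (Units.mk0 _ hQ.ne_zero))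
    exact (continuous_fst.matrix_mulVec continuous_snd).continuousAt.comp
      (g := fun p : Matrix ι ι ℝ × (ι → ℝ) => p.1 *ᵥ p.2) (hinv.prodMk (by fun_prop))
  have hg_zero : g 0 = -(Q⁻¹ *ᵥ w) := by simp [g, mulVec_neg]
  have hg_inv : ∀ t : ℝ, 0 < t → g t⁻¹ = (P + t • Q)⁻¹ *ᵥ (v - t • w) := by
    intro t ht
    have hP : P + t • Q = t • (t⁻¹ • P + Q) := by
      rw [smul_add, smul_smul, mul_inv_cancel₀ ht.ne', one_smul]
    have hv : v - t • w = t • (t⁻¹ • v - w) := by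
      rw [smul_sub, smul_smul, mul_inv_cancel₀ ht.ne', one_smul]
    rw [hP, hv, inv_smul_of_ne_zero ht.ne', smul_mulVec, mulVec_smul, smul_smul,
      inv_mul_cancel₀ ht.ne', one_smul]
  rw [← hg_zero]
  refine (hg_cont.tendsto.comp tendsto_inv_atTop_zero).congr' ?_
  filter_upwards [eventually_gt_atTop 0] with t ht using hg_inv t ht

end Matrix

theorem mean_limit_quadratic_general {n : ℕ} {A C0 : Matrix (Fin n) (Fin n) ℝ}
    (hA : A.PosDef) (b m0 : Fin n → ℝ) (c : ℝ) :
    Filter.Tendsto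
      (fun t : ℝ => (C0⁻¹ + (2 * t) • A)⁻¹.mulVec (C0⁻¹.mulVec m0 - t • b))
      Filter.atTop (nhds (-(1 / 2 : ℝ) • A⁻¹.mulVec b)) ∧
    ∀ x : Fin n → ℝ, x ≠ -(1 / 2 : ℝ) • A⁻¹.mulVec b →
      (-(1 / 2 : ℝ) • A⁻¹.mulVec b) ⬝ᵥ A.mulVec (-(1 / 2 : ℝ) • A⁻¹.mulVec b)
          + b ⬝ᵥ (-(1 / 2 : ℝ) • A⁻¹.mulVec b) + c
        < x ⬝ᵥ A.mulVec x + b ⬝ᵥ x + c := by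
  have hdet : IsUnit A.det := (isUnit_iff_isUnit_det A).mp hA.isUnit
  have h2det : IsUnit ((2 : ℝ) • A).det := by
    rw [det_smul]
    exact (isUnit_iff_ne_zero.mpr (by positivity)).mul hdet
  have hcrit : (2 : ℝ) • (A *ᵥ (-(1 / 2 : ℝ) • A⁻¹ *ᵥ b)) + b = 0 := by
    rw [mulVec_smul, mulVec_mulVec, mul_nonsing_inv _ hdet, one_mulVec, smul_smul]
    norm_num
  refine ⟨?_, fun x hx => by linarith [hA.quadratic_lt_of_critical hcrit hx]⟩
  have hlim := tendsto_inv_add_smul_mulVec_sub_smul (P := C0⁻¹) h2det (C0⁻¹ *ᵥ m0) b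
  rw [inv_smul_of_ne_zero two_ne_zero, smul_mulVec, ← neg_smul] at hlim
  simpa only [smul_smul, mul_comm, one_div] using hlim

open Matrix in
/-- If `A` is symmetric positive definite and `C(0)` positive definite, the AGRF mean
`m(t) = (C(0)⁻¹ + 2tA)⁻¹(C(0)⁻¹m(0) − tb)` converges to `−(1/2)A⁻¹b` as `t → ∞`, which
is the unique global minimizer of `f(x) = xᵀAx + bᵀx + c`. -/
theorem mean_limit_quadratic {n : ℕ} {A C0 : Matrix (Fin n) (Fin n) ℝ}
    (hA : A.PosDef) (hC0 : C0.PosDef) (b m0 : Fin n → ℝ) (c : ℝ) :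
    Filter.Tendsto
      (fun t : ℝ => (C0⁻¹ + (2 * t) • A)⁻¹.mulVec (C0⁻¹.mulVec m0 - t • b))
      Filter.atTop (nhds (-(1 / 2 : ℝ) • A⁻¹.mulVec b)) ∧
    ∀ x : Fin n → ℝ, x ≠ -(1 / 2 : ℝ) • A⁻¹.mulVec b →
      (-(1 / 2 : ℝ) • A⁻¹.mulVec b) ⬝ᵥ A.mulVec (-(1 / 2 : ℝ) • A⁻¹.mulVec b)
          + b ⬝ᵥ (-(1 / 2 : ℝ) • A⁻¹.mulVec b) + c
        < x ⬝ᵥ A.mulVec x + b ⬝ᵥ x + c :=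
  mean_limit_quadratic_general hA b m0 c
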